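/- arXiv:1607.07175 — 6 statements merged into one kernel-verified Lean document; each statement's English description precedes it below -/
import Mathlib

section
/- For every natural number n, the word 3·2^n·3·2^(n+1) (a 3, then n letters 2, then a 3, then n+1 letters 2) is a rop-word. -/
/-- Height of a word is the sum of its letters. A rop-word over {2,3}: even height and
no cyclic rotation factors as `u ++ v` with equal heights (empty parts allowed). -/
def IsRopWord (w : List ℕ) : Prop :=
  (∀ a ∈ w, a = 2 ∨ a = 3) ∧ Even w.sum ∧
  ∀ (k : ℕ) (u v : List ℕ), w.rotate k = u ++ v → u.sum ≠ v.sum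


-- sum of all-2 list
lemma sum_two_mul {u : List ℕ} (h : ∀ x ∈ u, x = 2) : u.sum = 2 * u.length := by
  have : u = List.replicate u.length 2 := (List.eq_replicate_length).2 h
  rw [this]; simp [List.sum_replicate, mul_comm]

lemma len_le_of_prefix_no3 (a : ℕ) (t u : List ℕ)
    (hu : u <+: List.replicate a 2 ++ 3 :: t) (h3 : (3:ℕ) ∉ u) : u.length ≤ a := by
  by_contra h
  push_neg at h
  have ha : a < u.length := h
  have h1 : u[a] = (List.replicate a 2 ++ 3 :: t)[a]'(by
      simp only [List.length_append, List.length_replicate, List.length_cons]; omega) :=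
    hu.getElem ha
  have h2 : (List.replicate a 2 ++ 3 :: t)[a]'(by
      simp only [List.length_append, List.length_replicate, List.length_cons]; omega) = 3 := by
    rw [List.getElem_append_right (by simp)]
    simp
  exact h3 (h1.trans h2 ▸ u.getElem_mem ha)

lemma sum_count {u : List ℕ} (h : ∀ x ∈ u, x = 2 ∨ x = 3) :
    u.sum = 2 * u.length + u.count 3 := by
  induction u with
  | nil => simp
  | cons x xs ih =>
    have hx := h x (by simp)
    have ih' := ih (fun y hy => h y (by simp [hy]))
    rcases hx with h2 | h3 <;> subst_vars <;>
      simp [List.count_cons, ih'] <;> ring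

lemma key (n a b c : ℕ) (ha : a ≤ n+1) (hc : c ≤ n+1) (habc : a + b + c = 2*n+1)
    (u v : List ℕ)
    (h : u ++ v = List.replicate a 2 ++ 3 :: (List.replicate b 2 ++ 3 :: List.replicate c 2)) :
    u.sum ≠ v.sum := by
  intro hs
  set L : List ℕ := List.replicate a 2 ++ 3 :: (List.replicate b 2 ++ 3 :: List.replicate c 2)
    with hL
  have hmem : ∀ x ∈ L, x = 2 ∨ x = 3 := by
    intro x hx
    simp only [hL, List.mem_append, List.mem_cons, List.mem_replicate] at hx
    rcases hx with ⟨-, h⟩ | h | ⟨-, h⟩ | h | ⟨-, h⟩ <;> omega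
  have hsumL : L.sum = 4*n + 8 := by
    simp only [hL, List.sum_append, List.sum_cons, List.sum_replicate, smul_eq_mul]
    omega
  have hcountL : L.count 3 = 2 := by
    simp [hL, List.count_replicate, List.count_cons]
  have huv : u.sum + v.sum = 4*n + 8 := by rw [← List.sum_append, h, hsumL]
  have hu : u.sum = 2*n + 4 := by omega
  have hv : v.sum = 2*n + 4 := by omega
  have hmemu : ∀ x ∈ u, x = 2 ∨ x = 3 := fun x hx => hmem x (h ▸ List.mem_append_left _ hx)
  have hmemv : ∀ x ∈ v, x = 2 ∨ x = 3 := fun x hx => hmem x (h ▸ List.mem_append_right _ hx)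
  have hcu := sum_count hmemu
  have hcv := sum_count hmemv
  have hcount : u.count 3 + v.count 3 = 2 := by rw [← List.count_append, h, hcountL]
  -- u.count 3 is even, so 0 or 2
  rcases Nat.even_or_odd (u.count 3) with he | ho
  swap
  · rcases ho with ⟨m, hm⟩; omega
  have : u.count 3 = 0 ∨ u.count 3 = 2 := by rcases he with ⟨m, hm⟩; omega
  rcases this with h0 | h2
  · -- u has no 3
    have h3u : (3:ℕ) ∉ u := by
      intro hmem3; exact absurd (List.count_pos_iff.2 hmem3) (by omega)
    have hlen : u.length ≤ a := len_le_of_prefix_no3 a _ u ⟨v, h⟩ h3u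
    omega
  · -- v has no 3
    have h0v : v.count 3 = 0 := by omega
    have h3v : (3:ℕ) ∉ v := by
      intro hmem3; exact absurd (List.count_pos_iff.2 hmem3) (by omega)
    have hrev : v.reverse <+: L.reverse := by
      rw [← h]; simp
    have hLrev : L.reverse = List.replicate c 2 ++ 3 :: (List.replicate b 2 ++ 3 :: List.replicate a 2) := by
      simp [hL, List.reverse_replicate]
    rw [hLrev] at hrev
    have hlen : v.reverse.length ≤ c := len_le_of_prefix_no3 c _ _ hrev (by simpa using h3v)
    simp only [List.length_reverse] at hlen
    omega

lemma rot (n k : ℕ) :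
    ∃ a b c, a ≤ n+1 ∧ c ≤ n+1 ∧ a + b + c = 2*n+1 ∧
      (3 :: (List.replicate n 2 ++ 3 :: List.replicate (n + 1) 2)).rotate k =
        List.replicate a 2 ++ 3 :: (List.replicate b 2 ++ 3 :: List.replicate c 2) := by
  set w : List ℕ := 3 :: (List.replicate n 2 ++ 3 :: List.replicate (n + 1) 2) with hw
  have hlen : w.length = 2*n + 3 := by simp [hw]; omega
  rw [← List.rotate_mod, hlen]
  obtain ⟨k', hk'⟩ : ∃ k', k % (2*n+3) = k' := ⟨_, rfl⟩
  rw [hk']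
  have hk'lt : k' < 2*n+3 := hk' ▸ Nat.mod_lt _ (by omega)
  rw [List.rotate_eq_drop_append_take (by omega : k' ≤ w.length)]
  rcases Nat.eq_zero_or_pos k' with h0 | hpos
  · exact ⟨0, n, n+1, by omega, by omega, by omega, by simp [h0, hw]⟩
  rcases le_or_gt k' (n+1) with hle | hgt
  · -- k' = j+1, 1 ≤ k' ≤ n+1
    obtain ⟨j, rfl⟩ : ∃ j, k' = j + 1 := ⟨k' - 1, by omega⟩
    have hj : j ≤ n := by omega
    refine ⟨n - j, n + 1, j, by omega, by omega, by omega, ?_⟩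
    simp only [hw, List.drop_succ_cons, List.take_succ_cons,
      List.drop_append, List.take_append,
      List.drop_replicate, List.take_replicate, List.length_replicate]
    have h1 : j - n = 0 := by omega
    have h2 : min j n = j := by omega
    rw [h1, h2]
    simp
  · -- k' = n+2+j
    obtain ⟨j, rfl⟩ : ∃ j, k' = n + 2 + j := ⟨k' - (n+2), by omega⟩
    have hj : j ≤ n := by omega
    refine ⟨n + 1 - j, n, j, by omega, by omega, by omega, ?_⟩
    have : n + 2 + j = (n + 1 + j) + 1 := by omega
    rw [this]
    simp only [hw, List.drop_succ_cons, List.take_succ_cons,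
      List.drop_append, List.take_append,
      List.drop_replicate, List.take_replicate, List.length_replicate]
    have h1 : n + 1 + j - n = j + 1 := by omega
    have h2 : min (n+1+j) n = n := by omega
    rw [h1, h2]
    simp only [List.drop_succ_cons, List.take_succ_cons, List.drop_replicate,
      List.take_replicate]
    have h3 : min j (n+1) = j := by omega
    have h4 : n - (n+1+j) = 0 := by omega
    rw [h3, h4]
    simp


/-- For every `n`, the word `3 2^n 3 2^(n+1)` is a rop-word. -/
theorem stmt_1 (n : ℕ) :
    IsRopWord (3 :: (List.replicate n 2 ++ 3 :: List.replicate (n + 1) 2)) := by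
  refine ⟨?_, ?_, ?_⟩
  · intro a ha
    simp only [List.mem_cons, List.mem_append, List.mem_replicate] at ha
    rcases ha with h | ⟨-, h⟩ | h | ⟨-, h⟩ <;> omega
  · have : (3 :: (List.replicate n 2 ++ 3 :: List.replicate (n + 1) 2)).sum = 4*n + 8 := by
      simp [List.sum_replicate]
      omega
    rw [this]
    exact ⟨2*n+4, by omega⟩
  · intro k u v huv
    obtain ⟨a, b, c, ha, hc, habc, hrot⟩ := rot n k
    exact key n a b c ha hc habc u v (by rw [← huv, hrot])
end

section
/- Every rop-word has odd length. -/
/-- Discrete IVT: an even-valued function with downward steps bounded by 2 that goes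
from positive to nonpositive hits 0. -/
lemma rop_ivt (f : ℕ → ℤ) (m : ℕ)
    (hstep : ∀ k, f k - 2 ≤ f (k + 1))
    (heven : ∀ k, Even (f k))
    (h0 : 0 < f 0) (hm : f m ≤ 0) : ∃ k, f k = 0 := by
  classical
  have hex : ∃ k, f k ≤ 0 := ⟨m, hm⟩
  have hk : f (Nat.find hex) ≤ 0 := Nat.find_spec hex
  have hkpos : Nat.find hex ≠ 0 := by
    intro h
    rw [h] at hk; omega
  obtain ⟨j, hj⟩ : ∃ j, Nat.find hex = j + 1 := ⟨Nat.find hex - 1, by omega⟩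
  have hjlt : ¬ f j ≤ 0 := Nat.find_min hex (by omega)
  rw [hj] at hk
  obtain ⟨c, hc⟩ := heven j
  obtain ⟨d, hd⟩ := heven (j + 1)
  have := hstep j
  exact ⟨j + 1, by omega⟩

/-- Rotating once shifts the sum of the first `m` letters by (new last − old first). -/
lemma rop_step (l : List ℕ) (m : ℕ) (h : l.length = m + m) (hm : 1 ≤ m) :
    ((l.rotate 1).take m).sum + l.headI = (l.take m).sum + l.getD m 0 := by
  cases l with
  | nil => simp at h; omega
  | cons a t =>
    have ht : t.length = m + m - 1 := by simpa using by simp at h; omega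
    have hmt : m ≤ t.length := by omega
    have h1 : (a :: t).rotate 1 = t ++ [a] := by
      simpa using List.rotate_cons_succ t a 0
    rw [h1, List.take_append_of_le_length hmt]
    have hmlt : m - 1 < t.length := by omega
    have h2 : (t.take m).sum = (t.take (m - 1)).sum + t[m - 1] := by
      have := List.sum_take_succ t (m - 1) hmlt
      rw [show m - 1 + 1 = m by omega] at this
      omega
    have h3 : (a :: t).take m = a :: t.take (m - 1) := by
      cases m with
      | zero => omega
      | succ n => simp
    have h4 : (a :: t).getD m 0 = t.getD (m - 1) 0 := by
      cases m with
      | zero => omega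
      | succ n => simp [List.getD]
    rw [h3, h4, List.getD_eq_getElem t 0 hmlt]
    simp only [List.sum_cons, List.headI]
    omega

/-- Every rop-word has odd length. -/
theorem stmt_2 (w : List ℕ) (hw : IsRopWord w) : Odd w.length := by
  obtain ⟨hlet, hsum, hrot⟩ := hw
  rw [← Nat.not_even_iff_odd]
  intro hev
  obtain ⟨m, hm⟩ := hev
  -- m = 0 case: empty word
  rcases Nat.eq_zero_or_pos m with rfl | hmpos
  · have hw0 : w = [] := List.length_eq_zero_iff.mp (by omega)
    exact hrot 0 [] [] (by simp [hw0]) rfl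
  -- general setup
  have hsumrot : ∀ k, (w.rotate k).sum = w.sum :=
    fun k => (List.rotate_perm w k).sum_eq
  have hlenrot : ∀ k, (w.rotate k).length = m + m :=
    fun k => by rw [List.length_rotate]; omega
  set f : ℕ → ℤ := fun k => 2 * (((w.rotate k).take m).sum : ℤ) - (w.sum : ℤ) with hf
  -- if some f k = 0, contradiction
  have hzero : ∀ k, f k ≠ 0 := by
    intro k hk
    set u := (w.rotate k).take m
    set v := (w.rotate k).drop m
    have huv : w.rotate k = u ++ v := (List.take_append_drop m (w.rotate k)).symm
    have hsum2 : u.sum + v.sum = w.sum := by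
      rw [← hsumrot k, huv]; simp
    apply hrot k u v huv
    simp only [hf] at hk
    have hu : (List.take m (w.rotate k)).sum = u.sum := rfl
    omega
  -- step bounds
  have hstep : ∀ k, f k - 2 ≤ f (k + 1) ∧ f (k + 1) ≤ f k + 2 := by
    intro k
    have hs := rop_step (w.rotate k) m (hlenrot k) hmpos
    rw [List.rotate_rotate] at hs
    have hne : w.rotate k ≠ [] := by
      intro h; have := hlenrot k; rw [h] at this; simp at this; omega
    have hh : (w.rotate k).headI ∈ w := by
      rw [← List.mem_rotate (n := k)]
      cases hrk : w.rotate k with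
      | nil => exact absurd hrk hne
      | cons a t => simp
    have hg : (w.rotate k).getD m 0 ∈ w := by
      rw [← List.mem_rotate (n := k)]
      rw [List.getD_eq_getElem _ 0 (by rw [hlenrot k]; omega)]
      exact List.getElem_mem _
    obtain h2 | h3 := hlet _ hh <;> obtain g2 | g3 := hlet _ hg <;>
      simp only [hf] <;> omega
  -- evenness
  have heven : ∀ k, Even (f k) := by
    intro k
    obtain ⟨c, hc⟩ := hsum
    exact ⟨(((w.rotate k).take m).sum : ℤ) - c, by simp only [hf]; push_cast [hc]; ring⟩
  -- f m = - f 0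
  have hfm : f m = - f 0 := by
    have hml : m ≤ w.length := by omega
    have hr : w.rotate m = w.drop m ++ w.take m := List.rotate_eq_drop_append_take hml
    have hdl : (w.drop m).length = m := by rw [List.length_drop]; omega
    have htk : (w.rotate m).take m = w.drop m := by
      rw [hr, List.take_append_of_le_length (le_of_eq hdl.symm), List.take_of_length_le (le_of_eq hdl)]
    have hsplit : (w.take m).sum + (w.drop m).sum = w.sum := by simp
    have h0 : (w.rotate 0).take m = w.take m := by simp
    simp only [hf, htk, h0]
    omega
  -- conclude via IVT
  rcases lt_trichotomy (f 0) 0 with hlt | heq | hgt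
  · have h1 : ∀ k, (-f) k - 2 ≤ (-f) (k + 1) := by
      intro k; have := (hstep k).2; simp only [Pi.neg_apply]; omega
    have h2 : ∀ k, Even ((-f) k) := fun k => by simpa using (heven k).neg
    have h3 : (0:ℤ) < (-f) 0 := by simp only [Pi.neg_apply]; omega
    have h4 : (-f) m ≤ 0 := by simp only [Pi.neg_apply]; omega
    obtain ⟨k, hk⟩ := rop_ivt (-f) m h1 h2 h3 h4
    simp only [Pi.neg_apply] at hk
    exact hzero k (by omega)
  · exact hzero 0 heq
  · obtain ⟨k, hk⟩ := rop_ivt f m (fun k => (hstep k).1) heven hgt (by omega)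
    exact hzero k hk
end

section
/- Let w = w_0 w_1 ... w_{n-1} be a word over {2,3} of height 2h. Then w is a rop-word if and only if (i) n is odd, say n = 2ℓ+1, and (ii) for every rotation of w, the height of its prefix of length ℓ equals h−2 or h−1. -/
namespace RopWord

lemma exists_le_lt_succ_of_le_of_lt {f : ℕ → ℕ} {x : ℕ} (h0 : f 0 ≤ x) :
    ∀ {m : ℕ}, x < f m → ∃ b, f b ≤ x ∧ x < f (b + 1)
  | 0, hm => absurd h0 hm.not_ge
  | m + 1, hm => by
    by_cases hxm : x < f m
    · exact exists_le_lt_succ_of_le_of_lt h0 hxm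
    · exact ⟨m, not_lt.mp hxm, hm⟩

lemma _root_.Monotone.eq_of_le_of_lt_succ {f : ℕ → ℕ} (hf : Monotone f) {x b b' : ℕ}
    (hb : f b ≤ x) (hb1 : x < f (b + 1)) (hb' : f b' ≤ x) (hb1' : x < f (b' + 1)) : b = b' := by
  by_contra hne
  rcases Nat.lt_or_gt_of_ne hne with hlt | hlt
  · exact (hf hlt).not_gt (hb'.trans_lt hb1) |>.elim
  · exact (hf hlt).not_gt (hb.trans_lt hb1') |>.elim

def prefixHeight (w : List ℕ) (k m : ℕ) : ℕ := ((w.rotate k).take m).sum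

section prefixHeight

variable (w : List ℕ)

lemma _root_.List.sum_rotate (k : ℕ) : (w.rotate k).sum = w.sum :=
  (w.rotate_perm k).sum_eq

lemma prefixHeight_mono (k : ℕ) : Monotone (prefixHeight w k) := by
  intro m m' hm
  obtain ⟨d, rfl⟩ := Nat.exists_eq_add_of_le hm
  simp only [prefixHeight, List.take_add, List.sum_append, Nat.le_add_right]

lemma prefixHeight_of_length_le (k : ℕ) {m : ℕ} (hm : w.length ≤ m) :
    prefixHeight w k m = w.sum := by
  rw [prefixHeight, List.take_of_length_le (by rwa [List.length_rotate]), List.sum_rotate]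

lemma prefixHeight_add_length (k m : ℕ) : prefixHeight w (k + w.length) m = prefixHeight w k m := by
  rw [prefixHeight, ← List.rotate_rotate, ← List.length_rotate w k, List.rotate_length]; rfl

lemma prefixHeight_add (k : ℕ) {a b : ℕ} (hab : a + b ≤ w.length) :
    prefixHeight w k (a + b) = prefixHeight w k a + prefixHeight w (k + a) b := by
  have ha : a ≤ (w.rotate k).length := by rw [List.length_rotate]; omega
  have hdrop : b ≤ ((w.rotate k).drop a).length := by
    rw [List.length_drop, List.length_rotate]; omega
  rw [prefixHeight, prefixHeight, prefixHeight, List.take_add, List.sum_append, ← List.rotate_rotate,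
    List.rotate_eq_drop_append_take ha, List.take_append_of_le_length hdrop]

lemma exists_mem_prefixHeight_succ (k : ℕ) {m : ℕ} (hm : m < w.length) :
    ∃ a ∈ w, prefixHeight w k (m + 1) = prefixHeight w k m + a := by
  have hm' : m < (w.rotate k).length := by rwa [List.length_rotate]
  exact ⟨(w.rotate k)[m], (w.rotate_perm k).mem_iff.mp (List.getElem_mem hm'),
    List.sum_take_succ _ _ _⟩

variable {w}

lemma prefixHeight_succ_bounds (hw : ∀ a ∈ w, a = 2 ∨ a = 3) (k : ℕ) {m : ℕ}
    (hm : m < w.length) :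
    prefixHeight w k m + 2 ≤ prefixHeight w k (m + 1) ∧
      prefixHeight w k (m + 1) ≤ prefixHeight w k m + 3 := by
  obtain ⟨a, ha, heq⟩ := exists_mem_prefixHeight_succ w k hm
  rcases hw a ha with rfl | rfl <;> omega

end prefixHeight

variable {w : List ℕ} {h : ℕ}

lemma isRopWord_iff_prefixHeight_ne (hw : ∀ a ∈ w, a = 2 ∨ a = 3) (hh : w.sum = 2 * h) :
    IsRopWord w ↔ ∀ k m, prefixHeight w k m ≠ h := by
  constructor
  · rintro ⟨-, -, hrop⟩ k m hkm
    have hsplit := (List.take_append_drop m (w.rotate k)).symm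
    have hsum := congrArg List.sum hsplit
    rw [List.sum_append, List.sum_rotate, hh] at hsum
    exact hrop k _ _ hsplit (by rw [prefixHeight] at hkm; omega)
  · refine fun hne => ⟨hw, ⟨h, by omega⟩, fun k u v huv heq => hne k u.length ?_⟩
    have hsum := congrArg List.sum huv
    rw [List.sum_append, List.sum_rotate, hh] at hsum
    rw [prefixHeight, huv, List.take_left]
    omega

lemma prefixHeight_ne_of_length_eq (hh : w.sum = 2 * h) {ℓ : ℕ} (hn : w.length = 2 * ℓ + 1)
    (hlt : ∀ k, prefixHeight w k ℓ < h) (k m : ℕ) : prefixHeight w k m ≠ h := by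
  rcases le_or_gt m ℓ with hm | hm
  · exact (prefixHeight_mono w k hm |>.trans_lt (hlt k)).ne
  · have hsplit := prefixHeight_add w k (a := ℓ + 1) (b := ℓ) (by omega)
    rw [show ℓ + 1 + ℓ = w.length by omega, prefixHeight_of_length_le w k le_rfl, hh] at hsplit
    have := prefixHeight_mono w k (show ℓ + 1 ≤ m from hm)
    have := hlt (k + (ℓ + 1))
    omega

def CrossesAt (w : List ℕ) (h k b : ℕ) : Prop :=
  prefixHeight w k b < h ∧ h < prefixHeight w k (b + 1)

lemma exists_crossesAt (hh : w.sum = 2 * h) (havoid : ∀ k m, prefixHeight w k m ≠ h) (k : ℕ) :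
    ∃ b, CrossesAt w h k b := by
  have hpos : 0 < h := Nat.pos_of_ne_zero (havoid k 0).symm
  obtain ⟨b, hb, hb1⟩ := exists_le_lt_succ_of_le_of_lt (f := prefixHeight w k) (Nat.zero_le h)
    (m := w.length) (by rw [prefixHeight_of_length_le w k le_rfl]; omega)
  exact ⟨b, lt_of_le_of_ne hb (havoid k b), hb1⟩

namespace CrossesAt

variable {k b : ℕ}

lemma lt_length (hh : w.sum = 2 * h) (hb : CrossesAt w h k b) : b < w.length := by
  by_contra hge
  have := hb.1
  rw [prefixHeight_of_length_le w k (not_lt.mp hge)] at this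
  omega

lemma unique (hb : CrossesAt w h k b) {b' : ℕ} (hb' : CrossesAt w h k b') : b = b' :=
  (prefixHeight_mono w k).eq_of_le_of_lt_succ hb.1.le hb.2 hb'.1.le hb'.2

lemma prefixHeight_eq (hw : ∀ a ∈ w, a = 2 ∨ a = 3) (hh : w.sum = 2 * h)
    (hb : CrossesAt w h k b) : prefixHeight w k b = h - 2 ∨ prefixHeight w k b = h - 1 := by
  have := prefixHeight_succ_bounds hw k (hb.lt_length hh)
  have := hb.1
  have := hb.2
  omega

lemma complement (hw : ∀ a ∈ w, a = 2 ∨ a = 3) (hh : w.sum = 2 * h)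
    (havoid : ∀ k m, prefixHeight w k m ≠ h) (hb : CrossesAt w h k b) :
    CrossesAt w h (k + (b + 1)) (w.length - (b + 1)) := by
  have hbn := hb.lt_length hh
  have hsplit := prefixHeight_add w k (a := b + 1) (b := w.length - (b + 1)) (by omega)
  rw [Nat.add_sub_cancel' hbn, prefixHeight_of_length_le w k le_rfl, hh] at hsplit
  have := prefixHeight_succ_bounds hw k hbn
  have := prefixHeight_succ_bounds hw (k + (b + 1)) (m := w.length - (b + 1)) (by omega)
  have := havoid (k + (b + 1)) (w.length - (b + 1) + 1)
  have := hb.1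
  have := hb.2
  constructor <;> omega

lemma succ (hw : ∀ a ∈ w, a = 2 ∨ a = 3) (hh : w.sum = 2 * h)
    (havoid : ∀ k m, prefixHeight w k m ≠ h) (hb : CrossesAt w h k b) :
    CrossesAt w h (k + 1) b := by
  have hbn := hb.lt_length hh
  have htwice := (hb.complement hw hh havoid).complement hw hh havoid
  rwa [show k + (b + 1) + (w.length - (b + 1) + 1) = k + 1 + w.length by omega,
    show w.length - (w.length - (b + 1) + 1) = b by omega, CrossesAt, prefixHeight_add_length,
    prefixHeight_add_length] at htwice

lemma forall_of_zero (hw : ∀ a ∈ w, a = 2 ∨ a = 3) (hh : w.sum = 2 * h)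
    (havoid : ∀ k m, prefixHeight w k m ≠ h) (hb : CrossesAt w h 0 b) (k : ℕ) :
    CrossesAt w h k b := by
  induction k with
  | zero => exact hb
  | succ k ih => exact ih.succ hw hh havoid

lemma length_eq (hw : ∀ a ∈ w, a = 2 ∨ a = 3) (hh : w.sum = 2 * h)
    (havoid : ∀ k m, prefixHeight w k m ≠ h) (hb : CrossesAt w h 0 b) :
    w.length = 2 * b + 1 := by
  have hbn := hb.lt_length hh
  have := ((hb.complement hw hh havoid).unique (hb.forall_of_zero hw hh havoid _))
  omega

end CrossesAt

end RopWord

/-- Bouchet: a word over {2,3} of height `2*h` is a rop-word iff its length is odd,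
say `2*ℓ+1`, and the prefix of length `ℓ` of every rotation has height `h-2` or `h-1`. -/
theorem stmt_5 (w : List ℕ) (hw : ∀ a ∈ w, a = 2 ∨ a = 3) (h : ℕ) (hh : w.sum = 2 * h) :
    IsRopWord w ↔
      ∃ ℓ : ℕ, w.length = 2 * ℓ + 1 ∧
        ∀ k : ℕ, ((w.rotate k).take ℓ).sum = h - 2 ∨ ((w.rotate k).take ℓ).sum = h - 1 := by
  open RopWord in
  rw [isRopWord_iff_prefixHeight_ne hw hh]
  constructor
  · intro havoid
    obtain ⟨b, hb⟩ := exists_crossesAt hh havoid 0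
    exact ⟨b, hb.length_eq hw hh havoid,
      fun k => (hb.forall_of_zero hw hh havoid k).prefixHeight_eq hw hh⟩
  · rintro ⟨ℓ, hn, hpref⟩
    have hpos : 0 < w.sum :=
      List.sum_pos w (fun a ha => by rcases hw a ha with rfl | rfl <;> norm_num)
        (List.ne_nil_of_length_pos (by omega))
    exact prefixHeight_ne_of_length_eq hh hn fun k => by
      rcases hpref k with hk | hk <;> rw [prefixHeight] <;> omega
end

section
/- Let w be a word over {2,3} of even height. Then w is a rop-word if and only if (i) its length is odd, say 2ℓ+1, and (ii) w admits an ℓ-pairing, i.e., the set of indices i with w_i = 3 can be partitioned into pairs of the form {j, j+ℓ} with indices taken modulo the length of w. -/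
/-- A `d`-pairing of `w`: a partition of the set of indices carrying the letter 3 into
pairs `{j, (j+d) % w.length}`; `S` records the first element of each pair. -/
def HasDPairing (w : List ℕ) (d : ℕ) : Prop :=
  ∃ S : Finset ℕ,
    (∀ j ∈ S, j < w.length) ∧
    (∀ i < w.length, w.getD i 0 = 3 ↔
      (i ∈ S ∨ i ∈ S.image fun j => (j + d) % w.length)) ∧
    Disjoint S (S.image fun j => (j + d) % w.length) ∧
    Set.InjOn (fun j => (j + d) % w.length) ↑S

/-!
Read cyclically, `w` is a rop-word iff no arc of `w` carries exactly half of its height `2h`.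
Since the letters differ by at most one, shifting an arc of fixed length changes its weight by
at most one, so all arcs of one length lie on the same side of `h`. The two halves of a word of
length `2m` would lie on opposite sides, so the length is odd, `2ℓ + 1`, and then every `ℓ`-arc
is lighter and every `(ℓ + 1)`-arc heavier than `h`. These two bounds pair each 3 at `p` with a
3 at `p + ℓ` or at `p - ℓ`; the first elements of the pairs are the 3s followed by an `ℓ`-arc
of weight `h - 1`. Conversely, an `ℓ`-arc contains at most one position of each pair of an
`ℓ`-pairing `S`, so its weight is at most `2ℓ + #S < h`, and no arc is balanced.
-/

open Finset

namespace RopWord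

lemma exists_eq_of_abs_succ_sub_le_one {f : ℕ → ℤ} (hf : ∀ i, |f (i + 1) - f i| ≤ 1)
    {a b : ℕ} {v : ℤ} (ha : f a ≤ v) (hb : v ≤ f b) : ∃ c, f c = v := by
  suffices key : ∀ a b, a ≤ b → ∀ v, f a ≤ v ∧ v ≤ f b ∨ f b ≤ v ∧ v ≤ f a → ∃ c, f c = v by
    rcases le_total a b with hab | hab
    · exact key a b hab v (.inl ⟨ha, hb⟩)
    · exact key b a hab v (.inr ⟨ha, hb⟩)
  intro a b hab
  induction b, hab using Nat.le_induction with
  | base => exact fun v hv => ⟨a, by omega⟩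
  | succ b _ ih =>
    intro v hv
    have hstep := abs_le.mp (hf b)
    by_cases hvb : f a ≤ v ∧ v ≤ f b ∨ f b ≤ v ∧ v ≤ f a
    · exact ih v hvb
    · exact ⟨b + 1, by omega⟩

lemma injOn_add_mod (d n : ℕ) : Set.InjOn (fun j => (j + d) % n) (Set.Iio n) :=
  fun _ ha _ hb hab => (Nat.ModEq.add_right_cancel' d hab).eq_of_lt_of_lt ha hb

def cyclicGet (w : List ℕ) (i : ℕ) : ℕ := w.getD (i % w.length) 0

def arcSum (w : List ℕ) (a t : ℕ) : ℕ := ∑ r ∈ range t, cyclicGet w (a + r)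

section Cyclic

variable (w : List ℕ)

lemma cyclicGet_of_lt {i : ℕ} (hi : i < w.length) : cyclicGet w i = w.getD i 0 := by
  rw [cyclicGet, Nat.mod_eq_of_lt hi]

lemma cyclicGet_mod_add (x j : ℕ) : cyclicGet w (x % w.length + j) = cyclicGet w (x + j) := by
  rw [cyclicGet, cyclicGet, Nat.mod_add_mod]

lemma cyclicGet_mod (x : ℕ) : cyclicGet w (x % w.length) = cyclicGet w x :=
  cyclicGet_mod_add w x 0

lemma cyclicGet_eq_two_or_three {w : List ℕ} (hw : ∀ a ∈ w, a = 2 ∨ a = 3) (hne : w ≠ [])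
    (i : ℕ) : cyclicGet w i = 2 ∨ cyclicGet w i = 3 := by
  have hi := Nat.mod_lt i (List.length_pos_iff.mpr hne)
  exact hw _ (by rw [cyclicGet, List.getD_eq_getElem _ _ hi]; exact List.getElem_mem hi)

lemma arcSum_mod_add (x j t : ℕ) : arcSum w (x % w.length + j) t = arcSum w (x + j) t := by
  simp only [arcSum, add_assoc, cyclicGet_mod_add]

lemma arcSum_add (a t t' : ℕ) : arcSum w a (t + t') = arcSum w a t + arcSum w (a + t) t' := by
  simp only [arcSum, sum_range_add, add_assoc]

lemma arcSum_succ (a t : ℕ) : arcSum w a (t + 1) = arcSum w a t + cyclicGet w (a + t) := by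
  simp [arcSum, sum_range_succ]

lemma arcSum_succ' (a t : ℕ) : arcSum w a (t + 1) = cyclicGet w a + arcSum w (a + 1) t := by
  rw [add_comm t, arcSum_add]
  simp [arcSum]

lemma arcSum_mono (a : ℕ) : Monotone (arcSum w a) :=
  fun _ _ h => sum_le_sum_of_subset (range_mono h)

lemma sum_take_rotate (k : ℕ) {t : ℕ} (ht : t ≤ w.length) :
    ((w.rotate k).take t).sum = arcSum w k t := by
  induction t with
  | zero => simp [arcSum]
  | succ t ih =>
    have ht' : t < (w.rotate k).length := by rw [List.length_rotate]; omega
    rw [List.sum_take_succ _ _ ht', ih (by omega), arcSum_succ, List.getElem_rotate, cyclicGet,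
      List.getD_eq_getElem, add_comm t k]

lemma arcSum_length (a : ℕ) : arcSum w a w.length = w.sum := by
  rw [← sum_take_rotate w a le_rfl, List.take_of_length_le (by simp), (w.rotate_perm a).sum_eq]

lemma arcSum_add_arcSum_sub (a : ℕ) {t : ℕ} (ht : t ≤ w.length) :
    arcSum w a t + arcSum w (a + t) (w.length - t) = w.sum := by
  rw [← arcSum_add, Nat.add_sub_cancel' ht, arcSum_length]

lemma abs_arcSum_succ_sub_le_one {w : List ℕ} (hw : ∀ a ∈ w, a = 2 ∨ a = 3) (i t : ℕ) :
    |(arcSum w (i + 1) t : ℤ) - arcSum w i t| ≤ 1 := by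
  have hshift : arcSum w i t + cyclicGet w (i + t) = cyclicGet w i + arcSum w (i + 1) t := by
    rw [← arcSum_succ, arcSum_succ']
  rcases eq_or_ne w [] with rfl | hne
  · simp [arcSum, cyclicGet]
  · have h₁ := cyclicGet_eq_two_or_three hw hne i
    have h₂ := cyclicGet_eq_two_or_three hw hne (i + t)
    rw [abs_le]
    omega

lemma exists_arcSum_eq {w : List ℕ} (hw : ∀ a ∈ w, a = 2 ∨ a = 3) {x y t v : ℕ}
    (hx : arcSum w x t ≤ v) (hy : v ≤ arcSum w y t) : ∃ c, arcSum w c t = v := by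
  obtain ⟨c, hc⟩ := exists_eq_of_abs_succ_sub_le_one (f := fun i => (arcSum w i t : ℤ))
    (abs_arcSum_succ_sub_le_one hw · t) (v := v) (Int.ofNat_le.mpr hx) (Int.ofNat_le.mpr hy)
  exact ⟨c, Int.ofNat_inj.mp hc⟩

end Cyclic

def NoBalancedArc (w : List ℕ) : Prop := ∀ a, ∀ t ≤ w.length, 2 * arcSum w a t ≠ w.sum

lemma isRopWord_iff (w : List ℕ) :
    IsRopWord w ↔ (∀ a ∈ w, a = 2 ∨ a = 3) ∧ Even w.sum ∧ NoBalancedArc w := by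
  refine and_congr_right' (and_congr_right'
    ⟨fun h a t ht hbal => ?_, fun h k u v huv hbal => ?_⟩)
  · refine h a _ _ (List.take_append_drop t _).symm ?_
    have hsplit := congrArg List.sum (List.take_append_drop t (w.rotate a))
    rw [List.sum_append, (w.rotate_perm a).sum_eq, sum_take_rotate w a ht] at hsplit
    rw [sum_take_rotate w a ht]
    omega
  · have hlen := congrArg List.length huv
    rw [List.length_rotate, List.length_append] at hlen
    have hsplit := congrArg List.sum huv
    rw [List.sum_append, (w.rotate_perm k).sum_eq] at hsplit
    have hu : u.sum = arcSum w k u.length := by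
      rw [← sum_take_rotate w k (by omega : u.length ≤ w.length), huv, List.take_left]
    exact h k u.length (by omega) (by omega)

namespace NoBalancedArc

variable {w : List ℕ} (hw : ∀ a ∈ w, a = 2 ∨ a = 3) (he : Even w.sum) (hnb : NoBalancedArc w)
include hw he hnb

lemma odd_length : Odd w.length := by
  obtain ⟨h, hh⟩ := he
  rw [← Nat.not_even_iff_odd]
  rintro ⟨m, hm⟩
  have hsplit := arcSum_add_arcSum_sub w 0 (t := m) (by omega)
  rw [zero_add, show w.length - m = m by omega] at hsplit
  have hbal : ∀ a, arcSum w a m ≠ h := fun a ha => hnb a m (by omega) (by omega)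
  rcases le_total (arcSum w 0 m) h with h0 | h0
  · obtain ⟨c, hc⟩ := exists_arcSum_eq hw h0 (by omega : h ≤ arcSum w m m)
    exact hbal c hc
  · obtain ⟨c, hc⟩ := exists_arcSum_eq hw (by omega : arcSum w m m ≤ h) h0
    exact hbal c hc

lemma two_mul_arcSum_lt {ℓ : ℕ} (hlen : w.length = 2 * ℓ + 1) (x : ℕ) :
    2 * arcSum w x ℓ < w.sum := by
  obtain ⟨h, hh⟩ := he
  have hbal : ∀ a, arcSum w a ℓ ≠ h := fun a ha => hnb a ℓ (by omega) (by omega)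
  by_contra! hx
  have hsplit := arcSum_add_arcSum_sub w x (t := ℓ) (by omega)
  rw [show w.length - ℓ = ℓ + 1 by omega] at hsplit
  have hmono := arcSum_mono w (x + ℓ) (by omega : ℓ ≤ ℓ + 1)
  obtain ⟨c, hc⟩ :=
    exists_arcSum_eq hw (x := x + ℓ) (y := x) (t := ℓ) (v := h) (by omega) (by omega)
  exact hbal c hc

end NoBalancedArc

lemma noBalancedArc_of_two_mul_arcSum_lt {w : List ℕ} {ℓ : ℕ} (hlen : w.length = 2 * ℓ + 1)
    (hshort : ∀ x, 2 * arcSum w x ℓ < w.sum) : NoBalancedArc w := by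
  intro a t ht hbal
  rcases le_or_gt t ℓ with htl | htl
  · have := arcSum_mono w a htl
    have := hshort a
    omega
  · have := arcSum_add_arcSum_sub w a ht
    have := arcSum_mono w (a + t) (show w.length - t ≤ ℓ by omega)
    have := hshort (a + t)
    omega

def IsAnchor (w : List ℕ) (ℓ p : ℕ) : Prop :=
  cyclicGet w p = 3 ∧ 2 * arcSum w (p + 1) ℓ + 2 = w.sum

lemma isAnchor_mod (w : List ℕ) (ℓ p : ℕ) : IsAnchor w ℓ (p % w.length) ↔ IsAnchor w ℓ p := by
  rw [IsAnchor, IsAnchor, cyclicGet_mod, arcSum_mod_add]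

section Anchor

variable {w : List ℕ} {ℓ : ℕ} (hw : ∀ a ∈ w, a = 2 ∨ a = 3) (hlen : w.length = 2 * ℓ + 1)
  (hshort : ∀ x, 2 * arcSum w x ℓ < w.sum)
include hw hlen hshort

lemma IsAnchor.partner {p : ℕ} (hp : IsAnchor w ℓ p) :
    cyclicGet w (p + ℓ) = 3 ∧ ¬ IsAnchor w ℓ (p + ℓ) := by
  have hsplit := arcSum_add_arcSum_sub w p (t := ℓ) (by omega)
  rw [show w.length - ℓ = ℓ + 1 by omega, arcSum_succ'] at hsplit
  have hfwd := arcSum_succ w p ℓ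
  rw [arcSum_succ'] at hfwd
  have := hshort p
  have := cyclicGet_eq_two_or_three hw (List.ne_nil_of_length_pos (by omega)) (p + ℓ)
  unfold IsAnchor at hp ⊢
  omega

lemma isAnchor_add_succ (he : Even w.sum) {q : ℕ} (hq : cyclicGet w q = 3)
    (hnq : ¬ IsAnchor w ℓ q) : IsAnchor w ℓ (q + ℓ + 1) := by
  have hsplit := arcSum_add_arcSum_sub w (q + 1) (t := ℓ) (by omega)
  rw [show w.length - ℓ = ℓ + 1 by omega, arcSum_succ', add_right_comm] at hsplit
  have hlong := arcSum_add_arcSum_sub w (q + 1) (t := ℓ + 1) (by omega)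
  rw [show w.length - (ℓ + 1) = ℓ by omega, arcSum_succ] at hlong
  have := hshort (q + 1)
  have := hshort (q + 1 + (ℓ + 1))
  have := cyclicGet_eq_two_or_three hw (List.ne_nil_of_length_pos (by omega)) (q + ℓ + 1)
  obtain ⟨h, hh⟩ := he
  unfold IsAnchor at hnq ⊢
  rw [show q + 1 + ℓ = q + ℓ + 1 by omega] at hlong
  omega

lemma hasDPairing_of_two_mul_arcSum_lt (he : Even w.sum) : HasDPairing w ℓ := by
  classical
  have hpos : 0 < w.length := by omega
  have hlt : ∀ j ∈ (range w.length).filter (IsAnchor w ℓ), j < w.length :=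
    fun j hj => mem_range.mp (mem_filter.mp hj).1
  refine ⟨(range w.length).filter (IsAnchor w ℓ), hlt, fun i hi => ?_, ?_,
    (injOn_add_mod ℓ w.length).mono hlt⟩
  · rw [← cyclicGet_of_lt w hi]
    simp only [mem_filter, mem_range, mem_image]
    constructor
    · intro h3
      by_cases hi' : IsAnchor w ℓ i
      · exact .inl ⟨hi, hi'⟩
      · refine .inr ⟨(i + ℓ + 1) % w.length, ⟨Nat.mod_lt _ hpos, (isAnchor_mod w ℓ _).2
          (isAnchor_add_succ hw hlen hshort he h3 hi')⟩, ?_⟩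
        rw [Nat.mod_add_mod, show i + ℓ + 1 + ℓ = i + w.length by omega, Nat.add_mod_right,
          Nat.mod_eq_of_lt hi]
    · rintro (⟨-, hi'⟩ | ⟨j, ⟨-, hj⟩, rfl⟩)
      · exact hi'.1
      · rw [cyclicGet_mod]
        exact (hj.partner hw hlen hshort).1
  · rw [disjoint_left]
    intro i hi hi'
    obtain ⟨j, hj, rfl⟩ := mem_image.mp hi'
    exact ((mem_filter.mp hj).2.partner hw hlen hshort).2
      ((isAnchor_mod w ℓ _).1 (mem_filter.mp hi).2)

end Anchor

lemma arcSum_eq_two_mul_add_card {w : List ℕ} (hw : ∀ a ∈ w, a = 2 ∨ a = 3) (hne : w ≠ [])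
    (a t : ℕ) :
    arcSum w a t = 2 * t + ((range t).filter fun r => cyclicGet w (a + r) = 3).card := by
  have hletter : ∀ r, cyclicGet w (a + r) = 2 + if cyclicGet w (a + r) = 3 then 1 else 0 := by
    intro r
    rcases cyclicGet_eq_two_or_three hw hne (a + r) with h | h <;> simp [h]
  rw [card_filter, arcSum, sum_congr rfl fun r _ => hletter r, sum_add_distrib, sum_const,
    card_range, smul_eq_mul, mul_comm]

lemma sum_eq_two_mul_length_add_card {w : List ℕ} (hw : ∀ a ∈ w, a = 2 ∨ a = 3) :
    w.sum = 2 * w.length + ((range w.length).filter fun i => w.getD i 0 = 3).card := by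
  rcases eq_or_ne w [] with rfl | hne
  · simp
  · rw [← arcSum_length w 0, arcSum_eq_two_mul_add_card hw hne]
    congr 2
    exact filter_congr fun i hi => by rw [zero_add, cyclicGet_of_lt w (mem_range.mp hi)]

section Pairing

variable {w : List ℕ} {d : ℕ} {S : Finset ℕ} (hS : ∀ j ∈ S, j < w.length)
  (h3 : ∀ i < w.length, w.getD i 0 = 3 ↔ (i ∈ S ∨ i ∈ S.image fun j => (j + d) % w.length))
include hS h3

lemma card_filter_getD_eq_two_mul_card
    (hdisj : Disjoint S (S.image fun j => (j + d) % w.length))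
    (hinj : Set.InjOn (fun j => (j + d) % w.length) ↑S) :
    ((range w.length).filter fun i => w.getD i 0 = 3).card = 2 * S.card := by
  have hset : (range w.length).filter (fun i => w.getD i 0 = 3)
      = S ∪ S.image fun j => (j + d) % w.length := by
    ext i
    rw [mem_filter, mem_range, mem_union]
    refine ⟨fun ⟨hi, hi3⟩ => (h3 i hi).1 hi3, fun hi => ?_⟩
    have hi_lt : i < w.length := by
      rcases hi with hi | hi
      · exact hS i hi
      · obtain ⟨j, hj, rfl⟩ := mem_image.mp hi
        exact Nat.mod_lt _ (by have := hS j hj; omega)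
    exact ⟨hi_lt, (h3 i hi_lt).2 hi⟩
  rw [hset, card_union_of_disjoint hdisj, card_image_of_injOn hinj, two_mul]

lemma card_filter_arc_le (hlen : w.length = 2 * d + 1) (a : ℕ) :
    ((range d).filter fun r => cyclicGet w (a + r) = 3).card ≤ S.card := by
  have hpos : 0 < w.length := by omega
  have hcancel : ∀ c {x y}, x < w.length → y < w.length →
      (c + x) % w.length = (c + y) % w.length → x = y :=
    fun c _ _ hx hy h => (Nat.ModEq.add_left_cancel' c h).eq_of_lt_of_lt hx hy
  -- a `3` at a position `i ∉ S` is the partner of `(i + d + 1) % w.length ∈ S`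
  refine card_le_card_of_injOn (fun r => if (a + r) % w.length ∈ S then (a + r) % w.length
    else (a + r + d + 1) % w.length) (fun r hr => ?_) (fun r hr r' hr' hrr' => ?_)
  · simp only [coe_filter, mem_range, Set.mem_ofPred_eq] at hr
    have hmod := Nat.mod_lt (a + r) hpos
    have h3r := (h3 _ hmod).1 (by rw [← cyclicGet_of_lt w hmod, cyclicGet_mod]; exact hr.2)
    dsimp only
    split_ifs with hrS
    · exact hrS
    · obtain ⟨j, hj, hji⟩ := mem_image.mp (h3r.resolve_left hrS)
      rw [add_assoc, ← Nat.mod_add_mod, ← hji, Nat.mod_add_mod,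
        show j + d + (d + 1) = j + w.length by omega, Nat.add_mod_right,
        Nat.mod_eq_of_lt (hS j hj)]
      exact hj
  · simp only [coe_filter, mem_range, Set.mem_ofPred_eq] at hr hr'
    dsimp only at hrr'
    split_ifs at hrr'
    · exact hcancel a (by omega) (by omega) hrr'
    · rw [add_assoc, add_assoc] at hrr'
      have := hcancel a (by omega) (by omega) hrr'
      omega
    · rw [add_assoc, add_assoc] at hrr'
      have := hcancel a (by omega) (by omega) hrr'
      omega
    · rw [show a + r + d + 1 = a + d + 1 + r by omega,
        show a + r' + d + 1 = a + d + 1 + r' by omega] at hrr'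
      exact hcancel _ (by omega) (by omega) hrr'

end Pairing

lemma isRopWord_of_hasDPairing {w : List ℕ} {ℓ : ℕ} (hw : ∀ a ∈ w, a = 2 ∨ a = 3)
    (hlen : w.length = 2 * ℓ + 1) (hp : HasDPairing w ℓ) : IsRopWord w := by
  obtain ⟨S, hS, h3, hdisj, hinj⟩ := hp
  have hsum := sum_eq_two_mul_length_add_card hw
  rw [card_filter_getD_eq_two_mul_card hS h3 hdisj hinj] at hsum
  have hshort : ∀ x, 2 * arcSum w x ℓ < w.sum := fun x => by
    have := arcSum_eq_two_mul_add_card hw (List.ne_nil_of_length_pos (by omega)) x ℓ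
    have := card_filter_arc_le hS h3 hlen x
    omega
  exact (isRopWord_iff w).2
    ⟨hw, ⟨w.length + S.card, by omega⟩, noBalancedArc_of_two_mul_arcSum_lt hlen hshort⟩

end RopWord

theorem stmt_6_general (w : List ℕ) (hw : ∀ a ∈ w, a = 2 ∨ a = 3) :
    IsRopWord w ↔ ∃ ℓ : ℕ, w.length = 2 * ℓ + 1 ∧ HasDPairing w ℓ := by
  constructor
  · intro hrop
    obtain ⟨-, he, hnb⟩ := (RopWord.isRopWord_iff w).1 hrop
    obtain ⟨ℓ, hlen⟩ := hnb.odd_length hw he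
    exact ⟨ℓ, hlen, RopWord.hasDPairing_of_two_mul_arcSum_lt hw hlen
      (hnb.two_mul_arcSum_lt hw he hlen) he⟩
  · rintro ⟨ℓ, hlen, hp⟩
    exact RopWord.isRopWord_of_hasDPairing hw hlen hp

/-- Bouchet: a word over {2,3} of even height is a rop-word iff its length is odd,
say `2*ℓ+1`, and it admits an `ℓ`-pairing. -/
theorem stmt_6 (w : List ℕ) (hw : ∀ a ∈ w, a = 2 ∨ a = 3) (he : Even w.sum) :
    IsRopWord w ↔ ∃ ℓ : ℕ, w.length = 2 * ℓ + 1 ∧ HasDPairing w ℓ :=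
  stmt_6_general w hw
end

section
/- Let w be a word over {2,3} of even height and odd length n = 2ℓ+1. Then w is a rop-word if and only if the word w^(ℓ), obtained by reading the letters of w in steps of ℓ modulo n starting from w_0, admits a 1-pairing (i.e., its occurrences of the letter 3 can be partitioned into adjacent pairs, cyclically). -/
/-- `readStep w p` reads the letters of `w` by steps of `p` modulo its length,
starting from `w₀`. -/
def readStep (w : List ℕ) (p : ℕ) : List ℕ :=
  (List.range w.length).map fun j => w.getD (j * p % w.length) 0

open Finset Function

namespace RopWord

section WindowSum

variable {M : Type*}

def windowSum [AddCommMonoid M] (f : ℕ → M) (k r : ℕ) : M := ∑ i ∈ range r, f (k + i)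

section AddCommMonoid

variable [AddCommMonoid M] (f : ℕ → M)

theorem windowSum_succ (k r : ℕ) : windowSum f k (r + 1) = windowSum f k r + f (k + r) :=
  sum_range_succ _ _

theorem windowSum_succ' (k r : ℕ) : windowSum f k (r + 1) = f k + windowSum f (k + 1) r := by
  rw [windowSum, sum_range_succ', add_zero, add_comm]
  congr 1
  exact sum_congr rfl fun i _ => by rw [add_assoc, add_comm i]

theorem windowSum_add (k a b : ℕ) :
    windowSum f k (a + b) = windowSum f k a + windowSum f (k + a) b := by
  simp only [windowSum, sum_range_add, add_assoc]

theorem periodic_windowSum {n : ℕ} (hf : Periodic f n) (r : ℕ) :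
    Periodic (fun k => windowSum f k r) n :=
  fun k => sum_congr rfl fun i _ => by rw [add_right_comm]; exact hf _

end AddCommMonoid

variable [AddCancelCommMonoid M] {f : ℕ → M}

theorem windowSum_period {n : ℕ} (hf : Periodic f n) (k : ℕ) :
    windowSum f k n = windowSum f 0 n := by
  induction k with
  | zero => rfl
  | succ k ih =>
    rw [← ih]
    apply add_left_cancel (a := f k)
    rw [← windowSum_succ', windowSum_succ, hf, add_comm]

theorem windowSum_add_windowSum {ℓ : ℕ} (hf : Periodic f (2 * ℓ + 1)) (k : ℕ) :
    windowSum f k (ℓ + 1) + windowSum f (k + ℓ) (ℓ + 1) =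
      windowSum f 0 (2 * ℓ + 1) + f (k + ℓ) := by
  rw [windowSum_succ f k ℓ, add_right_comm, ← windowSum_add, ← windowSum_period hf k]
  congr 2
  ring

end WindowSum

theorem windowSum_mono (f : ℕ → ℕ) (k : ℕ) {r r' : ℕ} (h : r ≤ r') :
    windowSum f k r ≤ windowSum f k r' :=
  sum_le_sum_of_subset (range_subset_range.mpr h)

theorem windowSum_succ_left_le {f : ℕ → ℕ} (hf : ∀ j, f j ≤ 1) (k r : ℕ) :
    windowSum f (k + 1) r ≤ windowSum f k r + 1 := by
  have := windowSum_succ f k r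
  have := windowSum_succ' f k r
  have := hf (k + r)
  omega

theorem exists_add_one_eq_of_lt_of_le {f : ℕ → ℕ} (hf : ∀ k, f (k + 1) ≤ f k + 1) {a s : ℕ}
    (ha : f a < s) (d : ℕ) (hd : s ≤ f (a + d)) : ∃ k, f k + 1 = s := by
  induction d with
  | zero => exact absurd hd (not_le.mpr ha)
  | succ d ih =>
    by_cases h : s ≤ f (a + d)
    · exact ih h
    · have := hf (a + d)
      rw [← add_assoc] at hd
      exact ⟨a + d, by omega⟩

theorem exists_mul_add_modEq (ℓ k : ℕ) : ∃ b, b * ℓ + ℓ + 1 ≡ k [MOD 2 * ℓ + 1] := by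
  refine ⟨(((k : ZMod (2 * ℓ + 1)) - ℓ - 1) * (-2)).val, ?_⟩
  rw [← ZMod.natCast_eq_natCast_iff]
  have h : ((2 * ℓ + 1 : ℕ) : ZMod (2 * ℓ + 1)) = 0 := ZMod.natCast_self _
  push_cast [ZMod.natCast_zmod_val] at h ⊢
  linear_combination (ℓ + 1 - k : ZMod (2 * ℓ + 1)) * h

def threeInd (u : List ℕ) (j : ℕ) : ℕ := if u.getD (j % u.length) 0 = 3 then 1 else 0

theorem threeInd_le_one (u : List ℕ) (j : ℕ) : threeInd u j ≤ 1 := by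
  unfold threeInd; split <;> omega

theorem threeInd_eq_one_iff {u : List ℕ} {j : ℕ} :
    threeInd u j = 1 ↔ u.getD (j % u.length) 0 = 3 := by
  unfold threeInd; split <;> simp_all

theorem periodic_threeInd (u : List ℕ) : Periodic (threeInd u) u.length := fun j => by
  simp [threeInd]

section Rotation

theorem sum_take_rotate_s7 {M : Type*} [AddCommMonoid M] (l : List M) (k : ℕ) {r : ℕ}
    (hr : r ≤ l.length) :
    ((l.rotate k).take r).sum = windowSum (fun j => l.getD (j % l.length) 0) k r := by
  induction r with
  | zero => simp [windowSum]
  | succ r ih =>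
    rw [List.sum_take_succ _ _ (by simp; omega), ih (by omega), windowSum_succ,
      List.getElem_rotate, List.getD_eq_getElem _ _ (Nat.mod_lt _ (by omega)), add_comm r]

variable {w : List ℕ}

theorem getD_mod_eq_two_add_threeInd (hw : ∀ a ∈ w, a = 2 ∨ a = 3) (hn : 0 < w.length)
    (j : ℕ) : w.getD (j % w.length) 0 = 2 + threeInd w j := by
  have hmem : w.getD (j % w.length) 0 ∈ w := by
    rw [List.getD_eq_getElem _ _ (Nat.mod_lt _ hn)]
    exact List.getElem_mem _
  unfold threeInd
  rcases hw _ hmem with h | h <;> rw [h] <;> rfl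

theorem sum_take_rotate_eq (hw : ∀ a ∈ w, a = 2 ∨ a = 3) (hn : 0 < w.length) (k : ℕ) {r : ℕ}
    (hr : r ≤ w.length) : ((w.rotate k).take r).sum = 2 * r + windowSum (threeInd w) k r := by
  simp only [sum_take_rotate_s7 w k hr, windowSum, getD_mod_eq_two_add_threeInd hw hn,
    sum_add_distrib, sum_const, card_range, smul_eq_mul]
  ring

theorem sum_eq_two_mul_length_add (hw : ∀ a ∈ w, a = 2 ∨ a = 3) (hn : 0 < w.length) :
    w.sum = 2 * w.length + windowSum (threeInd w) 0 w.length := by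
  simpa using sum_take_rotate_eq hw hn 0 le_rfl

variable {ℓ s : ℕ}

theorem sum_lt_sum_of_rotate_eq_append (hw : ∀ a ∈ w, a = 2 ∨ a = 3)
    (hl : w.length = 2 * ℓ + 1)
    (hs : windowSum (threeInd w) 0 w.length = 2 * s)
    (hwin : ∀ k, s ≤ windowSum (threeInd w) k (ℓ + 1)) {k : ℕ} {u v : List ℕ}
    (h : w.rotate k = u ++ v) (hu : ℓ + 1 ≤ u.length) : v.sum < u.sum := by
  have hlen : u.length + v.length = w.length := by simpa using (congrArg List.length h).symm
  have hsum : u.sum + v.sum = w.sum := by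
    rw [← List.sum_append, ← h, (w.rotate_perm k).sum_eq]
  have husum : u.sum = 2 * u.length + windowSum (threeInd w) k u.length := by
    rw [← sum_take_rotate_eq hw (by omega) k (by omega), h, List.take_left]
  have := sum_eq_two_mul_length_add hw (by omega)
  have := windowSum_mono (threeInd w) k hu
  have := hwin k
  omega

theorem sum_ne_of_rotate_eq_append (hw : ∀ a ∈ w, a = 2 ∨ a = 3)
    (hl : w.length = 2 * ℓ + 1)
    (hs : windowSum (threeInd w) 0 w.length = 2 * s)
    (hwin : ∀ k, s ≤ windowSum (threeInd w) k (ℓ + 1)) {k : ℕ} {u v : List ℕ}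
    (h : w.rotate k = u ++ v) : u.sum ≠ v.sum := by
  have hlen : u.length + v.length = w.length := by simpa using (congrArg List.length h).symm
  rcases le_or_gt (ℓ + 1) u.length with hu | hu
  · exact (sum_lt_sum_of_rotate_eq_append hw hl hs hwin h hu).ne'
  · have h' : w.rotate (k + u.length) = v ++ u := by
      rw [← List.rotate_rotate, h, List.rotate_append_length_eq]
    exact (sum_lt_sum_of_rotate_eq_append hw hl hs hwin h' (by omega)).ne

theorem le_windowSum_of_sum_ne (hw : ∀ a ∈ w, a = 2 ∨ a = 3) (hl : w.length = 2 * ℓ + 1)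
    (hs : windowSum (threeInd w) 0 w.length = 2 * s)
    (hrop : ∀ (k : ℕ) (u v : List ℕ), w.rotate k = u ++ v → u.sum ≠ v.sum) (k : ℕ) :
    s ≤ windowSum (threeInd w) k (ℓ + 1) := by
  by_contra! hk
  have hper : Periodic (threeInd w) (2 * ℓ + 1) := hl ▸ periodic_threeInd w
  have hcover := windowSum_add_windowSum hper k
  rw [← hl, hs] at hcover
  obtain ⟨c, hc⟩ :=
    exists_add_one_eq_of_lt_of_le (f := fun k => windowSum (threeInd w) k (ℓ + 1))
      (fun k => windowSum_succ_left_le (threeInd_le_one w) k _) hk ℓ (by omega)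
  refine hrop c _ _ (List.take_append_drop (ℓ + 1) _).symm ?_
  have htake := sum_take_rotate_eq hw (by omega) c (r := ℓ + 1) (by omega)
  have hsum : ((w.rotate c).take (ℓ + 1)).sum + ((w.rotate c).drop (ℓ + 1)).sum = w.sum := by
    rw [← List.sum_append, List.take_append_drop, (w.rotate_perm c).sum_eq]
  have := sum_eq_two_mul_length_add hw (by omega)
  omega

theorem isRopWord_iff_s7 (hw : ∀ a ∈ w, a = 2 ∨ a = 3) (he : Even w.sum)
    (hl : w.length = 2 * ℓ + 1) (hs : windowSum (threeInd w) 0 w.length = 2 * s) :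
    IsRopWord w ↔ ∀ k, s ≤ windowSum (threeInd w) k (ℓ + 1) :=
  ⟨fun h => le_windowSum_of_sum_ne hw hl hs h.2.2,
    fun h => ⟨hw, he, fun _ _ _ => sum_ne_of_rotate_eq_append hw hl hs h⟩⟩

end Rotation

section Pairing

/-- `p j = 1` marks `j` as the left end of a pair `{j, j + 1}` of a 1-pairing of the
`n`-periodic 0/1 sequence `χ`. -/
def IsPairingIndicator (χ : ℕ → ℕ) (n : ℕ) (p : ℕ → ℕ) : Prop :=
  Periodic p n ∧ (∀ j, p j ≤ 1) ∧ ∀ j, χ (j + 1) = p j + p (j + 1)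

theorem mem_image_succ_mod {S : Finset ℕ} {n : ℕ} (hS : ∀ j ∈ S, j < n) (j : ℕ) :
    (j + 1) % n ∈ S.image (fun x => (x + 1) % n) ↔ j % n ∈ S := by
  refine ⟨fun h => ?_, fun h => mem_image.mpr ⟨_, h, Nat.mod_add_mod j n 1⟩⟩
  obtain ⟨x, hx, hxj⟩ := mem_image.mp h
  rwa [← Nat.mod_eq_of_lt (hS x hx), Nat.ModEq.add_right_cancel' 1 hxj] at hx

theorem hasDPairing_one_iff {u : List ℕ} (hn : 0 < u.length) :
    HasDPairing u 1 ↔ ∃ p, IsPairingIndicator (threeInd u) u.length p := by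
  constructor
  · rintro ⟨S, hlt, hthree, hdisj, -⟩
    refine ⟨fun j => if j % u.length ∈ S then 1 else 0, fun j => by simp, fun j => by
      dsimp only; split <;> omega, fun j => ?_⟩
    have hmem := mem_image_succ_mod hlt j
    have h3 := (hthree _ (Nat.mod_lt (j + 1) hn)).trans (or_congr_right hmem)
    have hnot : ¬((j + 1) % u.length ∈ S ∧ j % u.length ∈ S) := fun h =>
      disjoint_left.mp hdisj h.1 (hmem.mpr h.2)
    simp only [threeInd, h3]
    split_ifs <;> first | rfl | tauto
  · rintro ⟨p, hper, hle, hχ⟩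
    set S := (range u.length).filter (p · = 1)
    have hS : ∀ j ∈ S, j < u.length := fun j hj => mem_range.mp (mem_filter.mp hj).1
    have hmemS : ∀ j, j % u.length ∈ S ↔ p j = 1 := fun j => by
      simp [S, Nat.mod_lt _ hn, hper.map_mod_nat]
    have hpred : ∀ i < u.length, ∃ j, (j + 1) % u.length = i := fun i hi =>
      ⟨i + u.length - 1, by
        rw [Nat.sub_add_cancel (by omega), Nat.add_mod_right, Nat.mod_eq_of_lt hi]⟩
    refine ⟨S, hS, fun i hi => ?_, disjoint_left.mpr fun i hi him => ?_, fun x hx y hy hxy => ?_⟩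
    · obtain ⟨j, rfl⟩ := hpred i hi
      rw [← threeInd_eq_one_iff, mem_image_succ_mod hS, hmemS, hmemS]
      have := hχ j
      have := hle j
      have := hle (j + 1)
      have := threeInd_le_one u (j + 1)
      omega
    · obtain ⟨j, rfl⟩ := hpred i (hS i hi)
      rw [mem_image_succ_mod hS, hmemS] at him
      rw [hmemS] at hi
      have := hχ j
      have := threeInd_le_one u (j + 1)
      omega
    · exact (Nat.ModEq.add_right_cancel' 1 hxy).eq_of_lt_of_lt (hS x hx) (hS y hy)

variable {χ E : ℕ → ℕ} {n s : ℕ}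

theorem isPairingIndicator_of_le (hE : Periodic E n) (hχ : ∀ b, χ b ≤ 1)
    (hrec : ∀ b, E b + E (b + 1) = 2 * s + χ b) (hle : ∀ b, s ≤ E b) :
    IsPairingIndicator χ n (fun j => E (j + 1) - s) := by
  refine ⟨fun j => ?_, fun j => ?_, fun j => ?_⟩
  · show E (j + n + 1) - s = E (j + 1) - s
    rw [add_right_comm, hE]
  · have := hrec j
    have := hχ j
    have := hle j
    show E (j + 1) - s ≤ 1
    omega
  · have := hrec (j + 1)
    have := hle (j + 1)
    have := hle (j + 1 + 1)
    show χ (j + 1) = E (j + 1) - s + (E (j + 1 + 1) - s)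
    omega

theorem le_of_isPairingIndicator (hn : Odd n) (hE : Periodic E n)
    (hrec : ∀ b, E b + E (b + 1) = 2 * s + χ b) {p : ℕ → ℕ} (hp : IsPairingIndicator χ n p)
    (b : ℕ) : s ≤ E b := by
  obtain ⟨hpn, -, hχ⟩ := hp
  set G : ℕ → ℤ := fun b => E (b + 1) - p b
  have hG : ∀ b, G b + G (b + 1) = 2 * s := fun b => by
    have := hrec (b + 1)
    have := hχ b
    simp only [G]
    omega
  have hG2 : Periodic G 2 := fun b => by
    have := hG b
    have := hG (b + 1)
    show G (b + 1 + 1) = G b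
    omega
  have hGn : Periodic G n := fun b => by
    simp only [G]
    rw [add_right_comm, hE, hpn]
  obtain ⟨m, rfl⟩ := hn
  have hG2m : Periodic G (m * 2) := by simpa using hG2.nat_mul m
  have hGs : ∀ b, G b = s := fun b => by
    have := hG b
    have : G (b + 1) = G b := by
      rw [← hGn b, show b + (2 * m + 1) = b + 1 + m * 2 by ring, hG2m]
    omega
  have := hGs (b + 2 * m)
  simp only [G] at this
  rw [← hE b, ← add_assoc]
  omega

end Pairing

section ReadStep

theorem readStep_length (w : List ℕ) (p : ℕ) : (readStep w p).length = w.length := by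
  simp [readStep]

theorem threeInd_readStep (w : List ℕ) (p j : ℕ) :
    threeInd (readStep w p) j = threeInd w (j * p) := by
  rcases Nat.eq_zero_or_pos w.length with h | hn
  · simp [List.eq_nil_of_length_eq_zero h, threeInd, readStep]
  simp [threeInd, readStep, List.getElem?_range (Nat.mod_lt j hn), Nat.mod_mul_mod]

variable {w : List ℕ} {ℓ s : ℕ}

theorem windowSum_add_windowSum_readStep (hl : w.length = 2 * ℓ + 1) (b : ℕ) :
    windowSum (threeInd w) (b * ℓ + ℓ + 1) (ℓ + 1) +
        windowSum (threeInd w) ((b + 1) * ℓ + ℓ + 1) (ℓ + 1) =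
      windowSum (threeInd w) 0 w.length + threeInd (readStep w ℓ) b := by
  have hper : Periodic (threeInd w) (2 * ℓ + 1) := hl ▸ periodic_threeInd w
  rw [show (b + 1) * ℓ + ℓ + 1 = b * ℓ + ℓ + 1 + ℓ by ring, windowSum_add_windowSum hper, hl,
    threeInd_readStep, show b * ℓ + ℓ + 1 + ℓ = b * ℓ + (2 * ℓ + 1) by ring, hper]

theorem hasDPairing_readStep_iff (hl : w.length = 2 * ℓ + 1)
    (hs : windowSum (threeInd w) 0 w.length = 2 * s) :
    HasDPairing (readStep w ℓ) 1 ↔ ∀ k, s ≤ windowSum (threeInd w) k (ℓ + 1) := by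
  have hW : Periodic (fun k => windowSum (threeInd w) k (ℓ + 1)) (2 * ℓ + 1) :=
    periodic_windowSum _ (hl ▸ periodic_threeInd w) _
  have hE : Periodic (fun b => windowSum (threeInd w) (b * ℓ + ℓ + 1) (ℓ + 1)) (2 * ℓ + 1) :=
    fun b => by
      simpa [show (b + (2 * ℓ + 1)) * ℓ + ℓ + 1 = b * ℓ + ℓ + 1 + ℓ * (2 * ℓ + 1) by ring]
        using (hW.nat_mul ℓ) (b * ℓ + ℓ + 1)
  have hrec b := (windowSum_add_windowSum_readStep hl b).trans (by rw [hs])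
  rw [hasDPairing_one_iff (by rw [readStep_length]; omega), readStep_length, hl]
  constructor
  · rintro ⟨p, hp⟩ k
    obtain ⟨b, hb⟩ := exists_mul_add_modEq ℓ k
    rw [← hW.map_mod_nat k, ← hb, hW.map_mod_nat]
    exact le_of_isPairingIndicator (odd_two_mul_add_one ℓ) hE hrec hp b
  · exact fun h => ⟨_, isPairingIndicator_of_le hE (threeInd_le_one _) hrec fun b => h _⟩

end ReadStep

end RopWord

/-- Bouchet: a word over {2,3} of even height and odd length `2*ℓ+1` is a rop-word iff
`w^(ℓ)` admits a `1`-pairing (its 3s pair up cyclically adjacently). -/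
theorem stmt_7 (w : List ℕ) (hw : ∀ a ∈ w, a = 2 ∨ a = 3) (he : Even w.sum)
    (ℓ : ℕ) (hl : w.length = 2 * ℓ + 1) :
    IsRopWord w ↔ HasDPairing (readStep w ℓ) 1 := by
  obtain ⟨s, hs⟩ : ∃ s, RopWord.windowSum (RopWord.threeInd w) 0 w.length = 2 * s := by
    obtain ⟨r, hr⟩ := he
    have := RopWord.sum_eq_two_mul_length_add hw (by omega)
    exact ⟨r - w.length, by omega⟩
  rw [RopWord.isRopWord_iff_s7 hw he hl hs, RopWord.hasDPairing_readStep_iff hl hs]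
end

section
/- If n is an odd prime, then the number of rop-words of length n (up to rotation) exceeds the number of Lyndon rop-words of length n by exactly 1, the difference being accounted for by the word 2^n. -/
/-- The rotation class (necklace) of a word. -/
def rotClass (w : List ℕ) : Set (List ℕ) := {v | ∃ k, v = w.rotate k}

/-- A Lyndon word: nonempty and strictly smaller than all its nontrivial rotations. -/
def IsLyndon (w : List ℕ) : Prop :=
  w ≠ [] ∧ ∀ k, 0 < k → k < w.length → w < w.rotate k

lemma exists_rotate_inv {α : Type*} (l : List α) (k : ℕ) : ∃ m, (l.rotate k).rotate m = l := by
  rcases eq_or_ne l [] with rfl | h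
  · exact ⟨0, by simp⟩
  have hn : 0 < l.length := List.length_pos_iff.mpr h
  refine ⟨l.length - k % l.length, ?_⟩
  rw [List.rotate_rotate, ← List.rotate_mod]
  have h2 : k + (l.length - k % l.length) = l.length * (k / l.length + 1) := by
    have h3 : l.length * (k / l.length + 1) = l.length * (k / l.length) + l.length := by ring
    have := Nat.div_add_mod k l.length; have := Nat.mod_lt k hn; omega
  rw [h2, Nat.mul_mod_right, List.rotate_zero]

lemma self_mem_rotClass (w : List ℕ) : w ∈ rotClass w := ⟨0, (List.rotate_zero w).symm⟩

lemma rotClass_rotate (w : List ℕ) (k : ℕ) : rotClass (w.rotate k) = rotClass w := by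
  ext v
  constructor
  · rintro ⟨j, rfl⟩; exact ⟨k + j, by rw [List.rotate_rotate]⟩
  · rintro ⟨j, rfl⟩
    obtain ⟨m, hm⟩ := exists_rotate_inv w k
    exact ⟨m + j, by rw [← List.rotate_rotate, hm]⟩

lemma isRopWord_rotate {w : List ℕ} (h : IsRopWord w) (k : ℕ) : IsRopWord (w.rotate k) := by
  obtain ⟨h1, h2, h3⟩ := h
  refine ⟨fun a ha => h1 a ((List.mem_rotate).1 ha), ?_, fun j u v huv => ?_⟩
  · rwa [(List.rotate_perm w k).sum_eq]
  · exact h3 (k + j) u v (by rwa [← List.rotate_rotate])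

lemma rop_replicate {n : ℕ} (ho : Odd n) : IsRopWord (List.replicate n 2) := by
  refine ⟨fun a ha => Or.inl (List.eq_of_mem_replicate ha), ?_, fun k u v huv => ?_⟩
  · simp [List.sum_replicate, Nat.even_mul]
  · rw [List.rotate_replicate] at huv
    have hu : u = List.replicate u.length 2 :=
      List.eq_replicate_iff.mpr ⟨rfl, fun b hb => List.eq_of_mem_replicate
        (huv ▸ List.mem_append_left v hb)⟩
    have hv : v = List.replicate v.length 2 :=
      List.eq_replicate_iff.mpr ⟨rfl, fun b hb => List.eq_of_mem_replicate
        (huv ▸ List.mem_append_right u hb)⟩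
    have hlen : u.length + v.length = n := by
      have := congrArg List.length huv; simpa using this.symm
    rw [hu, hv]
    simp only [List.sum_replicate, smul_eq_mul]
    intro hEq
    obtain ⟨m, hm⟩ := ho
    omega

lemma eq_replicate_of_rotate_eq {n k : ℕ} (hn : n.Prime) {l : List ℕ}
    (hl : l.length = n) (hk0 : 0 < k) (hkn : k < n) (h : l.rotate k = l) :
    ∃ c, l = List.replicate n c := by
  subst hl
  haveI : Fact l.length.Prime := ⟨hn⟩
  have hL : 0 < l.length := hn.pos
  refine ⟨l[0], ?_⟩
  have gcongr : ∀ (i j : ℕ) (hi : i < l.length) (hj : j < l.length), i = j →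
      l[i]'hi = l[j]'hj := by rintro i j hi hj rfl; rfl
  have step : ∀ i, (hi : i < l.length) → l[(i + k) % l.length]'(Nat.mod_lt _ hL) = l[i] := by
    intro i hi
    have h1 : (l.rotate k)[i]? = l[(i + k) % l.length]? := List.getElem?_rotate hi
    rw [h, List.getElem?_eq_getElem hi, List.getElem?_eq_getElem (Nat.mod_lt _ hL)] at h1
    exact (Option.some_inj.mp h1).symm
  have claim : ∀ m, l[(m * k) % l.length]'(Nat.mod_lt _ hL) = l[0] := by
    intro m
    induction m with
    | zero => simp
    | succ m ih =>
      have he : ((m + 1) * k) % l.length = ((m * k) % l.length + k) % l.length := by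
        rw [Nat.mod_add_mod, Nat.add_mul, Nat.one_mul]
      rw [gcongr _ _ (Nat.mod_lt _ hL) (Nat.mod_lt _ hL) he, step _ (Nat.mod_lt _ hL), ih]
  have surj : ∀ j, j < l.length → ∃ m, (m * k) % l.length = j := by
    intro j hj
    have hK : (k : ZMod l.length) ≠ 0 := by
      rw [Ne, ZMod.natCast_eq_zero_iff]
      exact fun hd => absurd (Nat.le_of_dvd hk0 hd) (not_le.mpr hkn)
    refine ⟨((j : ZMod l.length) * (k : ZMod l.length)⁻¹).val, ?_⟩
    have hcast : ((((j : ZMod l.length) * (k : ZMod l.length)⁻¹).val * k : ℕ) : ZMod l.length)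
        = (j : ZMod l.length) := by
      push_cast [ZMod.natCast_val, ZMod.cast_id]
      rw [mul_assoc, inv_mul_cancel₀ hK, mul_one]
    have hmod := (ZMod.natCast_eq_natCast_iff _ _ _).mp hcast
    have h2 : ((j : ZMod l.length) * (k : ZMod l.length)⁻¹).val * k % l.length
        = j % l.length := hmod
    rwa [Nat.mod_eq_of_lt hj] at h2
  apply List.ext_getElem (by simp)
  intro i h1 h2
  obtain ⟨m, hm⟩ := surj i h1
  rw [List.getElem_replicate]
  rw [← claim m]
  exact gcongr _ _ _ _ hm.symm

lemma not_lyndon_replicate {n : ℕ} (hn : 2 ≤ n) (c : ℕ) :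
    ¬ IsLyndon (List.replicate n c) := by
  rintro ⟨-, hlt⟩
  have := hlt 1 one_pos (by simpa using by omega)
  rw [List.rotate_replicate] at this
  exact lt_irrefl _ this

lemma lyndon_le_rotate {u : List ℕ} (hu : IsLyndon u) (k : ℕ) : u ≤ u.rotate k := by
  have hpos : 0 < u.length := List.length_pos_iff.mpr hu.1
  rw [← List.rotate_mod]
  rcases Nat.eq_zero_or_pos (k % u.length) with h | h
  · rw [h, List.rotate_zero]
  · exact (hu.2 _ h (Nat.mod_lt _ hpos)).le

lemma exists_lyndon {n : ℕ} (hn : n.Prime) (ho : Odd n) {w : List ℕ} (hw : IsRopWord w)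
    (hl : w.length = n) (hne : rotClass w ≠ rotClass (List.replicate n 2)) :
    ∃ m, IsRopWord m ∧ IsLyndon m ∧ m.length = n ∧ rotClass m = rotClass w := by
  have hn0 : 0 < n := hn.pos
  set F : Finset (List ℕ) := (Finset.range n).image (w.rotate) with hF
  have hFne : F.Nonempty := ⟨w.rotate 0, Finset.mem_image.mpr ⟨0, Finset.mem_range.mpr hn0, rfl⟩⟩
  set m := F.min' hFne with hm
  obtain ⟨j, hj, hjm⟩ := Finset.mem_image.mp (F.min'_mem hFne)
  rw [← hm] at hjm
  have hmrop : IsRopWord m := hjm ▸ isRopWord_rotate hw j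
  have hmlen : m.length = n := by rw [← hjm, List.length_rotate, hl]
  have hmclass : rotClass m = rotClass w := by rw [← hjm, rotClass_rotate]
  have hrotmem : ∀ k, m.rotate k ∈ F := by
    intro k
    have : m.rotate k = w.rotate ((j + k) % n) := by
      rw [← hjm, List.rotate_rotate, ← hl, List.rotate_mod]
    rw [this]
    exact Finset.mem_image.mpr ⟨(j + k) % n, Finset.mem_range.mpr (Nat.mod_lt _ hn0), rfl⟩
  refine ⟨m, hmrop, ⟨?_, ?_⟩, hmlen, hmclass⟩
  · intro h; rw [h] at hmlen; simp at hmlen; omega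
  · intro k hk0 hkn
    refine lt_of_le_of_ne (F.min'_le _ (hrotmem k)) fun heq => ?_
    obtain ⟨c, hc⟩ := eq_replicate_of_rotate_eq hn hmlen hk0 (hmlen ▸ hkn) heq.symm
    have hcmem : c ∈ m := hc ▸ List.mem_replicate.mpr ⟨hn0.ne', rfl⟩
    rcases hmrop.1 c hcmem with rfl | rfl
    · exact hne (by rw [← hmclass, hc])
    · have := hmrop.2.1
      rw [hc, List.sum_replicate, smul_eq_mul] at this
      obtain ⟨t, ht⟩ := ho
      obtain ⟨s, hs⟩ := this
      omega

lemma finite_S (n : ℕ) : {w : List ℕ | IsRopWord w ∧ IsLyndon w ∧ w.length = n}.Finite := by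
  have h1 : {l : List (Fin 4) | l.length = n}.Finite := List.finite_length_eq _ n
  apply Set.Finite.subset (h1.image (List.map Fin.val))
  rintro w ⟨hw, -, hlen⟩
  refine ⟨w.map (fun a => (⟨a % 4, Nat.mod_lt _ (by norm_num)⟩ : Fin 4)), by simpa using hlen, ?_⟩
  rw [List.map_map]
  conv_rhs => rw [← List.map_id w]
  exact List.map_congr_left fun a ha => by rcases hw.1 a ha with rfl | rfl <;> rfl

/-- For `n` an odd prime, the number of rop-words of length `n` up to rotation exceeds the
number of Lyndon rop-words of length `n` by exactly 1, the difference being `2^n`. -/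
theorem stmt_12 (n : ℕ) (hn : n.Prime) (ho : Odd n) :
    Set.ncard {C : Set (List ℕ) | ∃ w, IsRopWord w ∧ w.length = n ∧ C = rotClass w} =
      Set.ncard {w : List ℕ | IsRopWord w ∧ IsLyndon w ∧ w.length = n} + 1 ∧
    IsRopWord (List.replicate n 2) ∧ ¬ IsLyndon (List.replicate n 2) := by
  refine ⟨?_, rop_replicate ho, not_lyndon_replicate hn.two_le 2⟩
  set S := {w : List ℕ | IsRopWord w ∧ IsLyndon w ∧ w.length = n} with hS
  have hSfin : S.Finite := finite_S n
  have hrepl : ∀ {v : List ℕ}, v ∈ rotClass (List.replicate n 2) → v = List.replicate n 2 := by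
    rintro v ⟨k, rfl⟩; rw [List.rotate_replicate]
  have hnotmem : rotClass (List.replicate n 2) ∉ rotClass '' S := by
    rintro ⟨m, hm, heq⟩
    have : m = List.replicate n 2 := hrepl (heq ▸ self_mem_rotClass m)
    exact not_lyndon_replicate hn.two_le 2 (this ▸ hm.2.1)
  have hinj : Set.InjOn rotClass S := by
    rintro u hu v hv heq
    obtain ⟨k, hk⟩ := (heq ▸ self_mem_rotClass v : v ∈ rotClass u)
    obtain ⟨j, hj⟩ := (heq ▸ self_mem_rotClass u : u ∈ rotClass v)
    exact le_antisymm (hk ▸ lyndon_le_rotate hu.2.1 k) (hj ▸ lyndon_le_rotate hv.2.1 j)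
  have hT : {C : Set (List ℕ) | ∃ w, IsRopWord w ∧ w.length = n ∧ C = rotClass w} =
      insert (rotClass (List.replicate n 2)) (rotClass '' S) := by
    ext C
    constructor
    · rintro ⟨w, hw, hlen, rfl⟩
      by_cases h : rotClass w = rotClass (List.replicate n 2)
      · exact Or.inl h
      · obtain ⟨m, h1, h2, h3, h4⟩ := exists_lyndon hn ho hw hlen h
        exact Or.inr ⟨m, ⟨h1, h2, h3⟩, h4⟩
    · rintro (rfl | ⟨m, ⟨h1, h2, h3⟩, rfl⟩)
      · exact ⟨List.replicate n 2, rop_replicate ho, by simp, rfl⟩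
      · exact ⟨m, h1, h3, rfl⟩
  rw [hT, Set.ncard_insert_of_notMem hnotmem (hSfin.image _),
    Set.ncard_image_of_injOn hinj]
end
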